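/- arXiv:2009.08945 — 2 statements merged into one kernel-verified Lean document; each statement's English description precedes it below -/
import Mathlib

section
/- The Kohn–Nirenberg transform on ℝⁿ satisfies the Moyal identity: for Schwartz functions u, v, f, g, the L² inner product ⟨R(u,v), R(f,g)⟩ over ℝⁿ×ℝⁿ equals ⟨u,f⟩ · conj(⟨v,g⟩). -/
/-!
Expanding the product `R(u,v)(x,η) · conj R(f,g)(x,η)`, the phase `e^{-2πi x·η}` meets its
conjugate and cancels, so the integrand splits as `(u x · conj (f x)) · (conj (v̂ η) · ĝ η)`.
The double integral is then `⟨u,f⟩ · ⟨ĝ,v̂⟩`, and Plancherel turns `⟨ĝ,v̂⟩` into `conj ⟨v,g⟩`.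
-/

open MeasureTheory Real

noncomputable def fourierTransform1 {n : ℕ} (v : EuclideanSpace ℝ (Fin n) → ℂ)
    (η : EuclideanSpace ℝ (Fin n)) : ℂ :=
  ∫ y, Complex.exp (Complex.I * (-2 * π * (inner ℝ y η : ℝ))) * v y

noncomputable def Rih1 {n : ℕ} (u v : EuclideanSpace ℝ (Fin n) → ℂ)
    (x η : EuclideanSpace ℝ (Fin n)) : ℂ :=
  u x * Complex.exp (Complex.I * (-2 * π * (inner ℝ x η : ℝ))) *
    (starRingEnd ℂ) (fourierTransform1 v η)

open scoped FourierTransform ComplexConjugate SchwartzMap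

lemma fourierTransform1_eq_fourier {n : ℕ} (v : EuclideanSpace ℝ (Fin n) → ℂ) :
    fourierTransform1 v = 𝓕 v := by
  ext η
  rw [Real.fourier_eq', fourierTransform1]
  congr 1 with y
  rw [smul_eq_mul, mul_comm Complex.I]
  push_cast
  ring_nf

lemma exp_mul_I_mul_conj (θ : ℝ) :
    Complex.exp (Complex.I * θ) * conj (Complex.exp (Complex.I * θ)) = 1 := by
  rw [Complex.mul_conj', mul_comm, Complex.norm_exp_ofReal_mul_I]
  norm_num

lemma Rih1_mul_conj_Rih1 {n : ℕ} (u v f g : EuclideanSpace ℝ (Fin n) → ℂ)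
    (x η : EuclideanSpace ℝ (Fin n)) :
    Rih1 u v x η * conj (Rih1 f g x η) = u x * conj (f x) * (conj (𝓕 v η) * 𝓕 g η) := by
  have hphase := exp_mul_I_mul_conj (-2 * π * inner ℝ x η)
  push_cast at hphase
  simp only [Rih1, fourierTransform1_eq_fourier, map_mul, Complex.conj_conj]
  linear_combination (u x * conj (f x) * (conj (𝓕 v η) * 𝓕 g η)) * hphase

lemma integral_conj_fourier_mul_fourier {n : ℕ} (v g : 𝓢(EuclideanSpace ℝ (Fin n), ℂ)) :
    ∫ η, conj (𝓕 (⇑v) η) * 𝓕 (⇑g) η = conj (∫ x, v x * conj (g x)) := by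
  have plancherel := SchwartzMap.integral_inner_fourier_fourier v g
  rw [SchwartzMap.fourier_coe, SchwartzMap.fourier_coe] at plancherel
  simpa [← integral_conj, mul_comm] using plancherel

/-- Moyal identity for the Kohn--Nirenberg transform on ℝⁿ. -/
theorem stmt1 (n : ℕ) (u v f g : SchwartzMap (EuclideanSpace ℝ (Fin n)) ℂ) :
    (∫ x, ∫ η, Rih1 (fun t => u t) (fun t => v t) x η *
        (starRingEnd ℂ) (Rih1 (fun t => f t) (fun t => g t) x η))
      = (∫ x, u x * (starRingEnd ℂ) (f x)) *
        (starRingEnd ℂ) (∫ x, v x * (starRingEnd ℂ) (g x)) := by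
  simp_rw [Rih1_mul_conj_Rih1, integral_const_mul, integral_mul_const]
  rw [← integral_conj_fourier_mul_fourier]
end

section
/- Let K : ℝ² → ℂ be K(x,y) = 1/|x-y| if xy < 0 and 0 otherwise (the Born–Jordan original localization kernel). Then for Schwartz functions u, v on ℝ, the bilinear form ∫∫ u(x) conj(K(x,y)) conj(v(y)) dy dx is well-defined (the integral converges absolutely) — in particular ∫∫ |u(x)| K(x,y) |v(y)| dy dx < ∞. -/
/-!
Opposite signs give `|x - y|² ≥ |x| |y|`, so the kernel is dominated by the tensor product
`|x|^(-1/2) |y|^(-1/2)`. Since `|x|^(-1/2)` is locally integrable on `ℝ` and bounded away from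
the origin, `‖w x‖ |x|^(-1/2)` is integrable for every Schwartz function `w`, and the
dominating function is integrable on `ℝ²` by Fubini–Tonelli.
-/

open MeasureTheory

/-- The Born--Jordan original localization kernel on ℝ. -/
noncomputable def KBJ16 (x y : ℝ) : ℝ :=
  if x * y < 0 then |x - y|⁻¹ else 0

open Filter Module

section SchwartzRpow

variable {E F : Type*} [NormedAddCommGroup E] [NormedSpace ℝ E] [FiniteDimensional ℝ E]
  [MeasurableSpace E] [BorelSpace E] [NormedAddCommGroup F] [NormedSpace ℝ F]
  {μ : Measure E} [μ.IsAddHaarMeasure]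

theorem SchwartzMap.integrable_norm_mul_norm_rpow_neg (w : SchwartzMap E F) {α : ℝ}
    (hα₀ : 0 ≤ α) (hα : α < finrank ℝ E) :
    Integrable (fun x => ‖w x‖ * ‖x‖ ^ (-α)) μ := by
  have hdim : 0 < finrank ℝ E := by exact_mod_cast hα₀.trans_lt hα
  have hloc : LocallyIntegrable (fun x => ‖w x‖ * ‖x‖ ^ (-α)) μ := by
    refine locallyIntegrable_of_norm_le_rpow hdim hα (C := SchwartzMap.seminorm ℝ 0 0 w)
      (Eventually.of_forall fun x => ?_)
      (w.continuous.norm.measurable.mul (measurable_norm.pow_const _)).aestronglyMeasurable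
    rw [norm_mul, norm_norm, Real.norm_of_nonneg (by positivity)]
    gcongr
    exact w.norm_le_seminorm ℝ x
  have hbigO : (fun x => ‖w x‖ * ‖x‖ ^ (-α)) =O[cocompact E] fun x => ‖w x‖ := by
    refine Asymptotics.IsBigO.of_bound 1 ?_
    rw [← Metric.cobounded_eq_cocompact]
    filter_upwards [tendsto_norm_cobounded_atTop.eventually_ge_atTop 1] with x hx
    rw [norm_mul, norm_norm, Real.norm_of_nonneg (by positivity), one_mul]
    exact mul_le_of_le_one_right (norm_nonneg _)
      (Real.rpow_le_one_of_one_le_of_nonpos hx (by linarith))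
  exact hloc.integrable_of_isBigO_cocompact hbigO (w.integrable.norm.integrableAtFilter _)

end SchwartzRpow

lemma KBJ16_nonneg (x y : ℝ) : 0 ≤ KBJ16 x y := by
  unfold KBJ16
  split_ifs <;> positivity

lemma measurable_KBJ16 : Measurable (Function.uncurry KBJ16) :=
  Measurable.ite (measurableSet_lt (measurable_fst.mul measurable_snd) measurable_const)
    (measurable_fst.sub measurable_snd).abs.inv measurable_const

lemma KBJ16_le_abs_rpow_mul_abs_rpow (x y : ℝ) :
    KBJ16 x y ≤ |x| ^ (-(1 / 2 : ℝ)) * |y| ^ (-(1 / 2 : ℝ)) := by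
  unfold KBJ16
  split_ifs with hxy
  · have hpos : 0 < |x| * |y| := by rw [← abs_mul]; exact abs_pos.mpr hxy.ne
    have hsq : |x| * |y| ≤ |x - y| ^ 2 := by
      rw [← abs_mul, abs_of_neg hxy, sq_abs]
      nlinarith [sq_nonneg x, sq_nonneg y]
    calc |x - y|⁻¹ = (|x - y| ^ 2) ^ (-(1 / 2 : ℝ)) := by
          rw [← Real.rpow_natCast, ← Real.rpow_mul (abs_nonneg _)]
          norm_num [Real.rpow_neg_one]
      _ ≤ (|x| * |y|) ^ (-(1 / 2 : ℝ)) := Real.rpow_le_rpow_of_nonpos hpos hsq (by norm_num)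
      _ = _ := Real.mul_rpow (abs_nonneg x) (abs_nonneg y)
  · positivity

/-- The bilinear form of the Born--Jordan original localization is absolutely
convergent for Schwartz functions. -/
theorem stmt16 (u v : SchwartzMap ℝ ℂ) :
    MeasureTheory.Integrable
      (fun p : ℝ × ℝ => ‖u p.1‖ * KBJ16 p.1 p.2 * ‖v p.2‖) := by
  have hw (w : SchwartzMap ℝ ℂ) : Integrable (fun x : ℝ => ‖w x‖ * |x| ^ (-(1 / 2 : ℝ))) := by
    simpa only [Real.norm_eq_abs] using
      w.integrable_norm_mul_norm_rpow_neg (μ := volume) (by norm_num) (by norm_num)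
  have hdom : Integrable (fun p : ℝ × ℝ =>
      (‖u p.1‖ * |p.1| ^ (-(1 / 2 : ℝ))) * (‖v p.2‖ * |p.2| ^ (-(1 / 2 : ℝ)))) :=
    (hw u).mul_prod (hw v)
  refine hdom.mono' ?_ (Eventually.of_forall fun p => ?_)
  · exact ((u.continuous.norm.comp continuous_fst).measurable.mul measurable_KBJ16).mul
      (v.continuous.norm.comp continuous_snd).measurable |>.aestronglyMeasurable
  · rw [Real.norm_of_nonneg (by have := KBJ16_nonneg p.1 p.2; positivity)]
    calc ‖u p.1‖ * KBJ16 p.1 p.2 * ‖v p.2‖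
        ≤ ‖u p.1‖ * (|p.1| ^ (-(1 / 2 : ℝ)) * |p.2| ^ (-(1 / 2 : ℝ))) * ‖v p.2‖ := by
          gcongr
          exact KBJ16_le_abs_rpow_mul_abs_rpow p.1 p.2
      _ = (‖u p.1‖ * |p.1| ^ (-(1 / 2 : ℝ))) * (‖v p.2‖ * |p.2| ^ (-(1 / 2 : ℝ))) := by ring
end
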